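/- arXiv:1704.03606 — 2 statements merged into one kernel-verified Lean document; each statement's English description precedes it below -/
import Mathlib

section
/- Suppose X ∼ Bernoulli(p) with p ∈ [1/2, 1), P_{Y|X} = BIBO(α,β) with α, β ∈ [0, 1/2), and ᾱp̄ > βp. Then the perfect-privacy value h(P_{XY}, p) equals 1 − ζ q if αᾱp̄² < ββ̄p², and equals q otherwise, where q = αp̄ + β̄p and ζ := (ᾱp̄ − βp)/(β̄p − αp̄). -/
noncomputable section

/-- A row-stochastic matrix (channel) from an `n`-ary input to a `k`-ary output. -/
def IsStoch {n k : ℕ} (F : Fin n → Fin k → ℝ) : Prop :=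
  (∀ y z, 0 ≤ F y z) ∧ ∀ y, ∑ z, F y z = 1

/-- A joint pmf on `{1,…,m} × {1,…,n}`. -/
def IsPmf {m n : ℕ} (P : Fin m → Fin n → ℝ) : Prop :=
  (∀ x y, 0 ≤ P x y) ∧ ∑ x, ∑ y, P x y = 1

/-- `P_c(X) = max_x P_X(x)`. -/
def pcX {m n : ℕ} (P : Fin m → Fin n → ℝ) : ℝ := ⨆ x, ∑ y, P x y

/-- `P_c(Y) = max_y P_Y(y)`. -/
def pcY {m n : ℕ} (P : Fin m → Fin n → ℝ) : ℝ := ⨆ y, ∑ x, P x y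

/-- `P_c(X|Y) = Σ_y max_x P_{XY}(x,y)`. -/
def pcXgY {m n : ℕ} (P : Fin m → Fin n → ℝ) : ℝ := ∑ y, ⨆ x, P x y

/-- `𝒫(F) = P_c(X|Z) = Σ_z max_x Σ_y P_{XY}(x,y) F(y,z)` for a filter `F = P_{Z|Y}`
under the Markov chain `X – Y – Z`. -/
def privP {m n k : ℕ} (P : Fin m → Fin n → ℝ) (F : Fin n → Fin k → ℝ) : ℝ :=
  ∑ z, ⨆ x, ∑ y, P x y * F y z

/-- `𝒰(F) = P_c(Y|Z) = Σ_z max_y P_Y(y) F(y,z)` for a filter `F = P_{Z|Y}`. -/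
def privU {m n k : ℕ} (P : Fin m → Fin n → ℝ) (F : Fin n → Fin k → ℝ) : ℝ :=
  ∑ z, ⨆ y, (∑ x, P x y) * F y z

/-- The set `ℱ` of privacy filters: `n × (n+1)` row-stochastic matrices. -/
def filtSet (n : ℕ) : Set (Fin n → Fin (n + 1) → ℝ) := {F | IsStoch F}

/-- The privacy-aware guessing function
`h(P_{XY}, ε) = max { 𝒰(F) : F ∈ ℱ, 𝒫(F) ≤ ε }`. -/
def hFun {m n : ℕ} (P : Fin m → Fin n → ℝ) (ε : ℝ) : ℝ :=
  sSup {u | ∃ F ∈ filtSet n, privP P F ≤ ε ∧ privU P F = u}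

/-- The joint pmf of `(X, Y)` when `X ∼ Bernoulli(p)` (i.e. `P(X=1) = p`) and
`P_{Y|X} = BIBO(α, β)`, i.e. `P(Y=1|X=0) = α` and `P(Y=0|X=1) = β`. -/
def binJoint (p α β : ℝ) : Fin 2 → Fin 2 → ℝ := fun x y =>
  if x = 0 then (if y = 0 then (1 - p) * (1 - α) else (1 - p) * α)
  else (if y = 0 then p * β else p * (1 - β))

/-- The supremum over `Fin 2` is a maximum. -/
lemma sup2 (f : Fin 2 → ℝ) : (⨆ x, f x) = max (f 0) (f 1) := by
  apply le_antisymm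
  · exact ciSup_le fun x => by fin_cases x <;> simp [le_max_left, le_max_right]
  · exact max_le (le_ciSup (Set.finite_range f).bddAbove 0)
      (le_ciSup (Set.finite_range f).bddAbove 1)

lemma privP_bin (p α β : ℝ) (F : Fin 2 → Fin 3 → ℝ) :
    privP (binJoint p α β) F =
      ∑ z, max ((1-p)*(1-α) * F 0 z + (1-p)*α * F 1 z)
               (p*β * F 0 z + p*(1-β) * F 1 z) := by
  unfold privP
  refine Finset.sum_congr rfl fun z _ => ?_
  rw [sup2]
  simp [binJoint, Fin.sum_univ_two]

lemma privU_bin (p α β : ℝ) (F : Fin 2 → Fin 3 → ℝ) :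
    privU (binJoint p α β) F =
      ∑ z, max (((1-p)*(1-α) + p*β) * F 0 z) (((1-p)*α + p*(1-β)) * F 1 z) := by
  unfold privU
  refine Finset.sum_congr rfl fun z _ => ?_
  rw [sup2]
  simp [binJoint, Fin.sum_univ_two]

set_option maxHeartbeats 1000000 in
/-- Perfect-privacy value of the privacy-aware guessing function in the binary case:
if `X ∼ Bernoulli(p)`, `p ∈ [1/2, 1)`, `P_{Y|X} = BIBO(α,β)` with `α, β ∈ [0, 1/2)` and
`ᾱ p̄ > β p`, then `h(P_{XY}, p) = 1 - ζ q` if `α ᾱ p̄² < β β̄ p²` and `h(P_{XY}, p) = q`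
otherwise, where `q = α p̄ + β̄ p` and `ζ = (ᾱ p̄ - β p) / (β̄ p - α p̄)`. -/
theorem hFun_perfect_privacy_binary (p α β : ℝ)
    (hp : p ∈ Set.Ico (1 / 2 : ℝ) 1)
    (hα : α ∈ Set.Ico (0 : ℝ) (1 / 2)) (hβ : β ∈ Set.Ico (0 : ℝ) (1 / 2))
    (hnd : (1 - α) * (1 - p) > β * p) :
    hFun (binJoint p α β) p =
      if α * (1 - α) * (1 - p) ^ 2 < β * (1 - β) * p ^ 2 then
        1 - ((1 - α) * (1 - p) - β * p) / ((1 - β) * p - α * (1 - p))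
              * (α * (1 - p) + (1 - β) * p)
      else α * (1 - p) + (1 - β) * p := by
  obtain ⟨hp1, hp2⟩ := hp
  obtain ⟨hα0, hα1⟩ := hα
  obtain ⟨hβ0, hβ1⟩ := hβ
  have hdc : 0 < (1-β)*p - α*(1-p) := by nlinarith
  have hab : 0 < (1-α)*(1-p) - β*p := by linarith
  have hq : 0 < α*(1-p) + (1-β)*p := by nlinarith
  set ζ : ℝ := ((1 - α) * (1 - p) - β * p) / ((1 - β) * p - α * (1 - p)) with hζdef
  have hζ0 : 0 ≤ ζ := div_nonneg hab.le hdc.le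
  have hζ1 : ζ ≤ 1 := (div_le_one hdc).mpr (by nlinarith)
  have hζid : ((1-β)*p - α*(1-p)) * ζ = (1-α)*(1-p) - β*p := by
    rw [hζdef]; field_simp
  -- the privacy constraint holds column-wise
  have hcol : ∀ F : Fin 2 → Fin 3 → ℝ, IsStoch F → privP (binJoint p α β) F ≤ p →
      ∀ z, (1-p)*(1-α) * F 0 z + (1-p)*α * F 1 z ≤ p*β * F 0 z + p*(1-β) * F 1 z := by
    intro F hF hP
    obtain ⟨hFnn, hFrow⟩ := hF
    have hBsum : ∑ z, (p*β * F 0 z + p*(1-β) * F 1 z) = p := by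
      rw [Finset.sum_add_distrib, ← Finset.mul_sum, ← Finset.mul_sum, hFrow 0, hFrow 1]
      ring
    rw [privP_bin] at hP
    have hsum0 : ∑ z, (max ((1-p)*(1-α) * F 0 z + (1-p)*α * F 1 z)
        (p*β * F 0 z + p*(1-β) * F 1 z) - (p*β * F 0 z + p*(1-β) * F 1 z)) = 0 := by
      apply le_antisymm
      · rw [Finset.sum_sub_distrib, hBsum]; linarith
      · exact Finset.sum_nonneg fun z _ => by
          simp only [sub_nonneg]; exact le_max_right _ _
    intro z
    have := (Finset.sum_eq_zero_iff_of_nonneg (fun z _ => by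
      simp only [sub_nonneg]; exact le_max_right _ _)).mp hsum0 z (Finset.mem_univ z)
    have hmx := le_max_left ((1-p)*(1-α) * F 0 z + (1-p)*α * F 1 z)
      (p*β * F 0 z + p*(1-β) * F 1 z)
    linarith
  unfold hFun
  by_cases hcase : α * (1 - α) * (1 - p) ^ 2 < β * (1 - β) * p ^ 2
  · rw [if_pos hcase]
    -- upper bound
    have hub : ∀ u ∈ {u | ∃ F ∈ filtSet 2, privP (binJoint p α β) F ≤ p ∧
        privU (binJoint p α β) F = u},
        u ≤ 1 - ζ * (α * (1 - p) + (1 - β) * p) := by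
      rintro u ⟨F, hF, hP, rfl⟩
      have hc := hcol F hF hP
      obtain ⟨hFnn, hFrow⟩ := hF
      have hl0 : 0 ≤ ((1-p)*(1-α)+p*β) - ζ * ((1-p)*α+p*(1-β)) := by
        have : ζ * ((1-p)*α+p*(1-β)) ≤ (1-p)*(1-α)+p*β := by
          rw [hζdef, div_mul_eq_mul_div, div_le_iff₀ hdc]
          nlinarith
        linarith
      have percol : ∀ z, max (((1-p)*(1-α) + p*β) * F 0 z) (((1-p)*α + p*(1-β)) * F 1 z)
          ≤ (((1-p)*(1-α)+p*β) - ζ * ((1-p)*α+p*(1-β))) * F 0 z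
            + ((1-p)*α + p*(1-β)) * F 1 z := by
        intro z
        have h1 : ((1-α)*(1-p) - β*p) * F 0 z ≤ ((1-β)*p - α*(1-p)) * F 1 z := by
          nlinarith [hc z]
        have hζF : ζ * F 0 z ≤ F 1 z := by
          rw [hζdef, div_mul_eq_mul_div, div_le_iff₀ hdc]
          nlinarith
        apply max_le
        · have h2 := mul_le_mul_of_nonneg_left hζF hq.le
          nlinarith [h2]
        · nlinarith [mul_nonneg hl0 (hFnn 0 z)]
      rw [privU_bin]
      calc (∑ z, max (((1-p)*(1-α) + p*β) * F 0 z) (((1-p)*α + p*(1-β)) * F 1 z))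
          ≤ ∑ z, ((((1-p)*(1-α)+p*β) - ζ * ((1-p)*α+p*(1-β))) * F 0 z
            + ((1-p)*α + p*(1-β)) * F 1 z) := Finset.sum_le_sum fun z _ => percol z
        _ = (((1-p)*(1-α)+p*β) - ζ * ((1-p)*α+p*(1-β))) * 1 + ((1-p)*α + p*(1-β)) * 1 := by
            rw [Finset.sum_add_distrib, ← Finset.mul_sum, ← Finset.mul_sum, hFrow 0, hFrow 1]
        _ = 1 - ζ * (α * (1 - p) + (1 - β) * p) := by ring
    -- achievability
    have hmem : ∃ F ∈ filtSet 2, privP (binJoint p α β) F ≤ p ∧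
        privU (binJoint p α β) F = 1 - ζ * (α * (1 - p) + (1 - β) * p) := by
      refine ⟨![![1,0,0], ![ζ, 1-ζ, 0]], ⟨?_, ?_⟩, ?_, ?_⟩
      · intro y z; fin_cases y <;> fin_cases z <;> simp <;> linarith
      · intro y; fin_cases y <;> simp [Fin.sum_univ_three]
      · rw [privP_bin, Fin.sum_univ_three]
        norm_num [Matrix.cons_val_two]
        have m1 : ((1 - p) * (1 - α) + (1 - p) * α * ζ) ⊔ (p * β + p * (1 - β) * ζ)
            ≤ p * β + p * (1 - β) * ζ := max_le (by linarith [hζid]) le_rfl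
        have m2 : (1 - p) * α * (1 - ζ) ⊔ p * (1 - β) * (1 - ζ)
            ≤ p * (1 - β) * (1 - ζ) :=
          max_le (by nlinarith [mul_nonneg (sub_nonneg.mpr hζ1) hdc.le]) le_rfl
        linarith [m1, m2]
      · rw [privU_bin, Fin.sum_univ_three]
        norm_num [Matrix.cons_val_two]
        have e1 : ((1-p)*α + p*(1-β)) * ζ * ((1-β)*p - α*(1-p))
            = ((1-p)*α + p*(1-β)) * ((1-α)*(1-p) - β*p) := by
          linear_combination ((1-p)*α + p*(1-β)) * hζid
        have e2 : ((1-p)*α + p*(1-β)) * ((1-α)*(1-p) - β*p)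
            ≤ ((1-p)*(1-α) + p*β) * ((1-β)*p - α*(1-p)) := by nlinarith
        have m1 : ((1-p)*α + p*(1-β)) * ζ ≤ (1-p)*(1-α) + p*β :=
          le_of_mul_le_mul_right (by linarith) hdc
        have m2 : (0:ℝ) ≤ ((1-p)*α + p*(1-β)) * (1 - ζ) :=
          mul_nonneg (by nlinarith) (by linarith)
        rw [max_eq_left m1, max_eq_right m2]
        ring
    exact le_antisymm (csSup_le ⟨_, hmem⟩ hub) (le_csSup ⟨_, hub⟩ hmem)
  · rw [if_neg hcase]
    push_neg at hcase
    -- upper bound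
    have hub : ∀ u ∈ {u | ∃ F ∈ filtSet 2, privP (binJoint p α β) F ≤ p ∧
        privU (binJoint p α β) F = u},
        u ≤ α * (1 - p) + (1 - β) * p := by
      rintro u ⟨F, hF, hP, rfl⟩
      have hc := hcol F hF hP
      obtain ⟨hFnn, hFrow⟩ := hF
      have percol : ∀ z, max (((1-p)*(1-α) + p*β) * F 0 z) (((1-p)*α + p*(1-β)) * F 1 z)
          ≤ ((1-p)*α + p*(1-β)) * F 1 z := by
        intro z
        apply max_le _ le_rfl
        have hkey2 : ((1-p)*(1-α) + p*β) * ((1-β)*p - α*(1-p))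
            ≤ ((1-p)*α + p*(1-β)) * ((1-α)*(1-p) - β*p) := by nlinarith
        have h1 : ((1-α)*(1-p) - β*p) * F 0 z ≤ ((1-β)*p - α*(1-p)) * F 1 z := by
          nlinarith [hc z]
        have h3 := mul_le_mul_of_nonneg_right hkey2 (hFnn 0 z)
        have h4 := mul_le_mul_of_nonneg_left h1
          (show (0:ℝ) ≤ (1-p)*α + p*(1-β) by nlinarith)
        have h5 : ((1-p)*(1-α) + p*β) * F 0 z * ((1-β)*p - α*(1-p))
            ≤ ((1-p)*α + p*(1-β)) * F 1 z * ((1-β)*p - α*(1-p)) := by nlinarith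
        exact le_of_mul_le_mul_right h5 hdc
      rw [privU_bin]
      calc (∑ z, max (((1-p)*(1-α) + p*β) * F 0 z) (((1-p)*α + p*(1-β)) * F 1 z))
          ≤ ∑ z, ((1-p)*α + p*(1-β)) * F 1 z := Finset.sum_le_sum fun z _ => percol z
        _ = ((1-p)*α + p*(1-β)) * 1 := by rw [← Finset.mul_sum, hFrow 1]
        _ = α * (1 - p) + (1 - β) * p := by ring
    -- achievability
    have hmem : ∃ F ∈ filtSet 2, privP (binJoint p α β) F ≤ p ∧
        privU (binJoint p α β) F = α * (1 - p) + (1 - β) * p := by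
      refine ⟨![![1,0,0], ![1,0,0]], ⟨?_, ?_⟩, ?_, ?_⟩
      · intro y z; fin_cases y <;> fin_cases z <;> norm_num
      · intro y; fin_cases y <;> simp [Fin.sum_univ_three]
      · rw [privP_bin, Fin.sum_univ_three]
        norm_num [Matrix.cons_val_two]
        constructor <;> nlinarith
      · rw [privU_bin, Fin.sum_univ_three]
        norm_num [Matrix.cons_val_two]
        have hk : ((1-p)*(1-α)+p*β)*((1-β)*p-α*(1-p))
            ≤ ((1-p)*α+p*(1-β))*((1-α)*(1-p)-β*p) := by nlinarith
        have hk2 : ((1-p)*α+p*(1-β))*((1-α)*(1-p)-β*p)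
            ≤ ((1-p)*α+p*(1-β))*((1-β)*p-α*(1-p)) :=
          mul_le_mul_of_nonneg_left (by nlinarith) (by nlinarith)
        have hle : (1-p)*(1-α)+p*β ≤ (1-p)*α+p*(1-β) :=
          le_of_mul_le_mul_right (by nlinarith) hdc
        rw [max_eq_right hle]
        ring
    exact le_antisymm (csSup_le ⟨_, hmem⟩ hub) (le_csSup ⟨_, hub⟩ hmem)
end
end

section
/- Let (X,Y) have joint pmf P_{XY} on finite alphabets and let ν, μ ∈ (1, ∞). Then g^{(ν,μ)}(P_{XY}, ε) ≤ g^∞(P_{XY}, ψ(ν,ε)) + H_μ(Y) − H_∞(Y), where ψ(ν,ε) := ((ν−1)/ν) ε + (1/ν) H_∞(X). -/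
noncomputable section

/-- Rényi entropy of order `ν ∈ (1, ∞)` of a pmf `p` on a finite alphabet (base-2 logs):
`H_ν = (1/(1-ν)) log₂ (Σ_x p(x)^ν)`. -/
def renyiH (ν : ℝ) {m : ℕ} (p : Fin m → ℝ) : ℝ :=
  (1 / (1 - ν)) * Real.logb 2 (∑ x, p x ^ ν)

/-- Min-entropy `H_∞ = -log₂ max_x p(x)`. -/
def minEnt {m : ℕ} (p : Fin m → ℝ) : ℝ := - Real.logb 2 (⨆ x, p x)

/-- Arimoto's conditional entropy of order `ν ∈ (1, ∞)` for a joint pmf `P` on `X × Z`: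
`H_ν^A(X|Z) = (ν/(1-ν)) log₂ ( Σ_z (Σ_x P(x,z)^ν)^{1/ν} )`. -/
def arimotoCondEnt (ν : ℝ) {m k : ℕ} (P : Fin m → Fin k → ℝ) : ℝ :=
  (ν / (1 - ν)) * Real.logb 2 (∑ z, (∑ x, P x z ^ ν) ^ (1 / ν))

/-- Arimoto's mutual information of order `ν ∈ (1, ∞)`:
`I_ν^A(X;Z) = H_ν(X) - H_ν^A(X|Z)` (with `H_ν(X)` computed from the `X`-marginal). -/
def arimotoMI (ν : ℝ) {m k : ℕ} (P : Fin m → Fin k → ℝ) : ℝ :=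
  renyiH ν (fun x => ∑ z, P x z) - arimotoCondEnt ν P

/-- The utility-privacy function of order `(ν, μ)` for `ν, μ ∈ (1, ∞)`:
`g^{(ν,μ)}(P_{XY}, ε) = max { I_μ^A(Y;Z) : P_{Z|Y}, X–Y–Z, I_ν^A(X;Z) ≤ ε }`, the
maximum over channels to `Z ∈ {1,…,N+1}`, with joints
`P_{XZ}(x,z) = Σ_y P_{XY}(x,y) P_{Z|Y}(z|y)` and `P_{YZ}(y,z) = P_Y(y) P_{Z|Y}(z|y)`. -/
def gNuMu (ν μ : ℝ) {M N : ℕ} (P : Fin M → Fin N → ℝ) (ε : ℝ) : ℝ :=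
  sSup {v : ℝ | ∃ F ∈ filtSet N,
    arimotoMI ν (fun x z => ∑ y, P x y * F y z) ≤ ε ∧
    v = arimotoMI μ (fun y z => (∑ x, P x y) * F y z)}

/-- The order-`(∞,∞)` utility-privacy function
`g^∞(P_{XY}, ε) = max { log₂(P_c(Y|Z)/P_c(Y)) : P_{Z|Y}, X–Y–Z, log₂(P_c(X|Z)/P_c(X)) ≤ ε }`,
using `I_∞^A(X;Z) = log₂(P_c(X|Z)/P_c(X))`. -/
def gInf {M N : ℕ} (P : Fin M → Fin N → ℝ) (ε : ℝ) : ℝ :=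
  sSup {v : ℝ | ∃ F ∈ filtSet N,
    Real.logb 2 (privP P F / pcX P) ≤ ε ∧
    v = Real.logb 2 (privU P F / pcY P)}


lemma fin_le_sup {n : ℕ} (f : Fin n → ℝ) (i : Fin n) : f i ≤ ⨆ j, f j :=
  le_ciSup ((Set.finite_range f).bddAbove) i

lemma fin_sup_le {n : ℕ} (hn : 0 < n) (f : Fin n → ℝ) {a : ℝ} (h : ∀ i, f i ≤ a) :
    (⨆ j, f j) ≤ a := by
  haveI : Nonempty (Fin n) := ⟨⟨0, hn⟩⟩
  exact ciSup_le h

lemma fin_sup_nonneg {n : ℕ} (hn : 0 < n) (f : Fin n → ℝ) (hf : ∀ i, 0 ≤ f i) :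
    0 ≤ ⨆ j, f j :=
  le_trans (hf ⟨0, hn⟩) (fin_le_sup f ⟨0, hn⟩)

lemma fin_sup_le_sum {n : ℕ} (hn : 0 < n) (f : Fin n → ℝ) (hf : ∀ i, 0 ≤ f i) :
    (⨆ j, f j) ≤ ∑ i, f i :=
  fin_sup_le hn f fun i => Finset.single_le_sum (fun j _ => hf j) (Finset.mem_univ i)

/-- `Σ f^ν ≤ (sup f)^(ν-1) * Σ f` for nonneg `f` and `ν > 1`. -/
lemma sum_rpow_le {n : ℕ} (hn : 0 < n) (f : Fin n → ℝ) (hf : ∀ i, 0 ≤ f i)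
    {ν : ℝ} (hν : 1 < ν) :
    ∑ i, f i ^ ν ≤ (⨆ j, f j) ^ (ν - 1) * ∑ i, f i := by
  rw [Finset.mul_sum]
  apply Finset.sum_le_sum
  intro i _
  rcases eq_or_lt_of_le (hf i) with h0 | h0
  · rw [← h0, Real.zero_rpow (by positivity), mul_zero]
  · have he : f i ^ ν = f i ^ (ν - 1) * f i := by
      nth_rewrite 1 [show ν = (ν - 1) + 1 by ring]
      rw [Real.rpow_add h0, Real.rpow_one]
    rw [he]
    exact mul_le_mul_of_nonneg_right
      (Real.rpow_le_rpow (hf i) (fin_le_sup f i) (by linarith)) (hf i)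

lemma logb_rpow' {x : ℝ} (hx : 0 < x) (y : ℝ) :
    Real.logb 2 (x ^ y) = y * Real.logb 2 x := by
  simp [Real.logb, Real.log_rpow hx, mul_div_assoc]

/-- `sup f ≤ (Σ f^ν)^(1/ν)` for nonneg `f`, `ν > 1`. -/
lemma sup_le_sum_rpow {n : ℕ} (hn : 0 < n) (f : Fin n → ℝ) (hf : ∀ i, 0 ≤ f i)
    {ν : ℝ} (hν : 1 < ν) :
    (⨆ j, f j) ≤ (∑ i, f i ^ ν) ^ (1 / ν) := by
  have hν0 : (0:ℝ) < ν := by linarith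
  apply fin_sup_le hn
  intro i
  have h1 : f i = (f i ^ ν) ^ (1 / ν) := by
    rw [← Real.rpow_mul (hf i), mul_one_div_cancel (ne_of_gt hν0), Real.rpow_one]
  rw [h1]
  exact Real.rpow_le_rpow (Real.rpow_nonneg (hf i) ν)
    (Finset.single_le_sum (fun j _ => Real.rpow_nonneg (hf j) ν) (Finset.mem_univ i))
    (by positivity)

/-- Two-sequence Hölder-type inequality: `Σ f^t g^(1-t) ≤ (Σ f)^t` when `Σ g = 1`. -/
lemma hoelder_sum {k : ℕ} (f g : Fin k → ℝ) (hf : ∀ z, 0 ≤ f z) (hg : ∀ z, 0 ≤ g z)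
    {t : ℝ} (ht : 0 < t) (ht1 : t < 1) (hT : 0 < ∑ z, f z) (hG : ∑ z, g z = 1) :
    ∑ z, f z ^ t * g z ^ (1 - t) ≤ (∑ z, f z) ^ t := by
  set T := ∑ z, f z with hTdef
  have hTpow : (0:ℝ) < T ^ t := Real.rpow_pos_of_pos hT t
  have key : ∀ z, f z ^ t * g z ^ (1 - t) ≤ T ^ t * (t * (f z / T) + (1 - t) * g z) := by
    intro z
    have hgm := Real.geom_mean_le_arith_mean2_weighted (w₁ := t) (w₂ := 1 - t)
      (p₁ := f z / T) (p₂ := g z) (le_of_lt ht) (by linarith)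
      (div_nonneg (hf z) (le_of_lt hT)) (hg z) (by ring)
    have hdiv : (f z / T) ^ t = f z ^ t / T ^ t := Real.div_rpow (hf z) (le_of_lt hT) t
    calc f z ^ t * g z ^ (1 - t)
        = T ^ t * ((f z / T) ^ t * g z ^ (1 - t)) := by
          rw [hdiv]; field_simp
      _ ≤ T ^ t * (t * (f z / T) + (1 - t) * g z) :=
          mul_le_mul_of_nonneg_left hgm (le_of_lt hTpow)
  calc ∑ z, f z ^ t * g z ^ (1 - t)
      ≤ ∑ z, T ^ t * (t * (f z / T) + (1 - t) * g z) :=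
        Finset.sum_le_sum fun z _ => key z
    _ = T ^ t * (t * (T / T) + (1 - t) * 1) := by
        rw [← Finset.mul_sum]
        congr 1
        rw [Finset.sum_add_distrib, ← Finset.mul_sum, ← Finset.mul_sum, ← Finset.sum_div, ← hTdef, hG]
    _ = T ^ t := by rw [div_self (ne_of_gt hT)]; ring

lemma exists_pos_of_sum_one {n : ℕ} (f : Fin n → ℝ) (hf : ∀ i, 0 ≤ f i)
    (h1 : ∑ i, f i = 1) : ∃ i, 0 < f i := by
  by_contra h
  push_neg at h
  have : ∑ i, f i = 0 := Finset.sum_eq_zero fun i _ => le_antisymm (h i) (hf i)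
  rw [this] at h1; norm_num at h1

lemma sup_pos_of_sum_one {n : ℕ} (f : Fin n → ℝ) (hf : ∀ i, 0 ≤ f i)
    (h1 : ∑ i, f i = 1) : 0 < ⨆ i, f i := by
  obtain ⟨i, hi⟩ := exists_pos_of_sum_one f hf h1
  exact lt_of_lt_of_le hi (fin_le_sup f i)

lemma sum_rpow_pos_of_sum_one {n : ℕ} (f : Fin n → ℝ) (hf : ∀ i, 0 ≤ f i)
    (h1 : ∑ i, f i = 1) (ν : ℝ) : 0 < ∑ i, f i ^ ν := by
  obtain ⟨i, hi⟩ := exists_pos_of_sum_one f hf h1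
  exact Finset.sum_pos' (fun j _ => Real.rpow_nonneg (hf j) ν)
    ⟨i, Finset.mem_univ i, Real.rpow_pos_of_pos hi ν⟩

/-- `H_μ(f) ≥ H_∞(f)` for a pmf `f` and `μ > 1`. -/
lemma minEnt_le_renyiH {n : ℕ} (hn : 0 < n) (f : Fin n → ℝ) (hf : ∀ i, 0 ≤ f i)
    (h1 : ∑ i, f i = 1) {μ : ℝ} (hμ : 1 < μ) : minEnt f ≤ renyiH μ f := by
  have hm : 0 < ⨆ i, f i := sup_pos_of_sum_one f hf h1
  have hA : 0 < ∑ i, f i ^ μ := sum_rpow_pos_of_sum_one f hf h1 μ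
  have hAle : ∑ i, f i ^ μ ≤ (⨆ i, f i) ^ (μ - 1) := by
    have := sum_rpow_le hn f hf hμ
    rwa [h1, mul_one] at this
  have hL : Real.logb 2 (∑ i, f i ^ μ) ≤ (μ - 1) * Real.logb 2 (⨆ i, f i) := by
    rw [← logb_rpow' hm]
    exact Real.logb_le_logb_of_le one_lt_two hA hAle
  have hc : (1 : ℝ) / (1 - μ) ≤ 0 := by
    apply div_nonpos_of_nonneg_of_nonpos <;> linarith
  have := mul_le_mul_of_nonpos_left hL hc
  have hid : 1 / (1 - μ) * ((μ - 1) * Real.logb 2 (⨆ i, f i))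
      = -Real.logb 2 (⨆ i, f i) := by
    have hne : (1:ℝ) - μ ≠ 0 := by linarith
    field_simp
    ring
  rw [hid] at this
  simpa [minEnt, renyiH] using this

lemma pcY_pos {M N : ℕ} (P : Fin M → Fin N → ℝ) (hP : IsPmf P) : 0 < pcY P := by
  apply sup_pos_of_sum_one _ (fun y => Finset.sum_nonneg fun x _ => hP.1 x y)
  rw [Finset.sum_comm]; exact hP.2

lemma pcY_le_privU {M N : ℕ} (hN : 0 < N) (P : Fin M → Fin N → ℝ) (hP : IsPmf P)
    {F : Fin N → Fin (N + 1) → ℝ} (hF : IsStoch F) : pcY P ≤ privU P F := by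
  apply fin_sup_le hN
  intro y
  calc ∑ x, P x y = ∑ z, (∑ x, P x y) * F y z := by
        rw [← Finset.mul_sum, hF.2 y, mul_one]
    _ ≤ ∑ z, ⨆ y', (∑ x, P x y') * F y' z :=
        Finset.sum_le_sum fun z _ => fin_le_sup (fun y' => (∑ x, P x y') * F y' z) y

lemma privU_le_one {M N : ℕ} (hN : 0 < N) (P : Fin M → Fin N → ℝ) (hP : IsPmf P)
    {F : Fin N → Fin (N + 1) → ℝ} (hF : IsStoch F) : privU P F ≤ 1 := by
  have h1 : ∀ z, (⨆ y, (∑ x, P x y) * F y z) ≤ ∑ y, (∑ x, P x y) * F y z := fun z =>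
    fin_sup_le_sum hN _ fun y =>
      mul_nonneg (Finset.sum_nonneg fun x _ => hP.1 x y) (hF.1 y z)
  calc privU P F ≤ ∑ z, ∑ y, (∑ x, P x y) * F y z := Finset.sum_le_sum fun z _ => h1 z
    _ = ∑ y, (∑ x, P x y) * ∑ z, F y z := by rw [Finset.sum_comm]; simp [Finset.mul_sum]
    _ = 1 := by simp only [hF.2, mul_one]; rw [Finset.sum_comm]; exact hP.2

lemma gInf_bddAbove {M N : ℕ} (hN : 0 < N) (P : Fin M → Fin N → ℝ) (hP : IsPmf P) (ψ : ℝ) :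
    BddAbove {v : ℝ | ∃ F ∈ filtSet N,
      Real.logb 2 (privP P F / pcX P) ≤ ψ ∧
      v = Real.logb 2 (privU P F / pcY P)} := by
  refine ⟨Real.logb 2 (1 / pcY P), ?_⟩
  rintro w ⟨F, hF, _, rfl⟩
  have hpc := pcY_pos P hP
  have hpos : 0 < privU P F / pcY P :=
    div_pos (lt_of_lt_of_le hpc (pcY_le_privU hN P hP hF)) hpc
  apply Real.logb_le_logb_of_le one_lt_two hpos
  exact div_le_div_of_nonneg_right (privU_le_one hN P hP hF) hpc.le

lemma gInf_nonneg {M N : ℕ} (hN : 0 < N) (P : Fin M → Fin N → ℝ) (hP : IsPmf P) (ψ : ℝ) :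
    0 ≤ gInf P ψ := by
  rcases Set.eq_empty_or_nonempty {v : ℝ | ∃ F ∈ filtSet N,
      Real.logb 2 (privP P F / pcX P) ≤ ψ ∧
      v = Real.logb 2 (privU P F / pcY P)} with he | ⟨w, hw⟩
  · unfold gInf; rw [he, Real.sSup_empty]
  · have hw' := hw
    obtain ⟨F, hF, _, rfl⟩ := hw'
    have hpc := pcY_pos P hP
    have h1 : (1 : ℝ) ≤ privU P F / pcY P :=
      (one_le_div hpc).mpr (pcY_le_privU hN P hP hF)
    exact le_trans (Real.logb_nonneg one_lt_two h1)
      (le_csSup (gInf_bddAbove hN P hP ψ) hw)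

/-- Upper bound on `g^{(ν,μ)}` via `g^∞`: for `ν, μ ∈ (1, ∞)`,
`g^{(ν,μ)}(P_{XY}, ε) ≤ g^∞(P_{XY}, ψ(ν,ε)) + H_μ(Y) - H_∞(Y)`, where
`ψ(ν,ε) = ((ν-1)/ν) ε + (1/ν) H_∞(X)`. -/
theorem gNuMu_le_gInf {M N : ℕ} (hM : 0 < M) (hN : 0 < N)
    (P : Fin M → Fin N → ℝ) (hP : IsPmf P)
    (ν μ : ℝ) (hν : 1 < ν) (hμ : 1 < μ) (ε : ℝ) :
    gNuMu ν μ P ε ≤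
      gInf P ((ν - 1) / ν * ε + (1 / ν) * minEnt (fun x => ∑ y, P x y))
        + renyiH μ (fun y => ∑ x, P x y) - minEnt (fun y => ∑ x, P x y) := by
  obtain ⟨hP0, hP1⟩ := hP
  have hν0 : (0:ℝ) < ν := by linarith
  have hνne : (1:ℝ) - ν ≠ 0 := by intro h; linarith [h]
  have hμne : (1:ℝ) - μ ≠ 0 := by intro h; linarith [h]
  set ψ := (ν - 1) / ν * ε + (1 / ν) * minEnt (fun x => ∑ y, P x y) with hψ
  have hp0 : ∀ x, 0 ≤ ∑ y, P x y := fun x => Finset.sum_nonneg fun y _ => hP0 x y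
  have hq0 : ∀ y, 0 ≤ ∑ x, P x y := fun y => Finset.sum_nonneg fun x _ => hP0 x y
  have hsumq : ∑ y, ∑ x, P x y = 1 := by rw [Finset.sum_comm]; exact hP1
  have hmX : 0 < ⨆ x, ∑ y, P x y := sup_pos_of_sum_one _ hp0 hP1
  have hmY : 0 < pcY P := pcY_pos P ⟨hP0, hP1⟩
  have hHmu : minEnt (fun y => ∑ x, P x y) ≤ renyiH μ (fun y => ∑ x, P x y) :=
    minEnt_le_renyiH hN _ hq0 hsumq hμ
  have hg0 : 0 ≤ gInf P ψ := gInf_nonneg hN P ⟨hP0, hP1⟩ ψ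
  apply Real.sSup_le _ (by linarith)
  rintro v ⟨F, hF, hcon, hv⟩
  obtain ⟨hF0, hF1⟩ := hF
  -- marginals
  have hQ0 : ∀ z x, 0 ≤ ∑ y, P x y * F y z := fun z x =>
    Finset.sum_nonneg fun y _ => mul_nonneg (hP0 x y) (hF0 y z)
  have hQmarg : ∀ x, ∑ z, ∑ y, P x y * F y z = ∑ y, P x y := fun x => by
    rw [Finset.sum_comm]
    exact Finset.sum_congr rfl fun y _ => by rw [← Finset.mul_sum, hF1 y, mul_one]
  have hR0 : ∀ z y, 0 ≤ (∑ x, P x y) * F y z := fun z y =>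
    mul_nonneg (hq0 y) (hF0 y z)
  have hRmarg : ∀ y, ∑ z, (∑ x, P x y) * F y z = ∑ x, P x y := fun y => by
    rw [← Finset.mul_sum, hF1 y, mul_one]
  -- Pc(X|Z) bounds
  have hpcX_le_TX : (⨆ x, ∑ y, P x y) ≤ privP P F := by
    apply fin_sup_le hM
    intro x
    calc ∑ y, P x y = ∑ z, ∑ y, P x y * F y z := (hQmarg x).symm
      _ ≤ ∑ z, ⨆ x', ∑ y, P x' y * F y z :=
        Finset.sum_le_sum fun z _ => fin_le_sup (fun x' => ∑ y, P x' y * F y z) x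
  have hTX_pos : 0 < privP P F := lt_of_lt_of_le hmX hpcX_le_TX
  have hTX_le_SX : privP P F ≤ ∑ z, (∑ x, (∑ y, P x y * F y z) ^ ν) ^ (1/ν) :=
    Finset.sum_le_sum fun z _ =>
      sup_le_sum_rpow hM (fun x => ∑ y, P x y * F y z) (hQ0 z) hν
  have hSX_pos : 0 < ∑ z, (∑ x, (∑ y, P x y * F y z) ^ ν) ^ (1/ν) :=
    lt_of_lt_of_le hTX_pos hTX_le_SX
  -- privacy constraint analysis
  simp only [arimotoMI, renyiH, arimotoCondEnt] at hcon
  simp only [hQmarg] at hcon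
  have hA_pos : 0 < ∑ x, (∑ y, P x y) ^ ν := sum_rpow_pos_of_sum_one _ hp0 hP1 ν
  have hA_le : ∑ x, (∑ y, P x y) ^ ν ≤ (⨆ x, ∑ y, P x y) ^ (ν - 1) := by
    have := sum_rpow_le hM (fun x => ∑ y, P x y) hp0 hν
    rwa [hP1, mul_one] at this
  have hLA : Real.logb 2 (∑ x, (∑ y, P x y) ^ ν)
      ≤ (ν - 1) * Real.logb 2 (⨆ x, ∑ y, P x y) := by
    rw [← logb_rpow' hmX]
    exact Real.logb_le_logb_of_le one_lt_two hA_pos hA_le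
  have hcneg : (1:ℝ)/(1-ν) ≤ 0 := by
    apply div_nonpos_of_nonneg_of_nonpos <;> linarith
  have h1 := mul_le_mul_of_nonpos_left hLA hcneg
  have hid1 : 1/(1-ν) * ((ν - 1) * Real.logb 2 (⨆ x, ∑ y, P x y))
      = -Real.logb 2 (⨆ x, ∑ y, P x y) := by field_simp; ring
  rw [hid1] at h1
  have hLTX : Real.logb 2 (privP P F)
      ≤ Real.logb 2 (∑ z, (∑ x, (∑ y, P x y * F y z) ^ ν) ^ (1/ν)) :=
    Real.logb_le_logb_of_le one_lt_two hTX_pos hTX_le_SX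
  have hc2 : ν/(1-ν) ≤ 0 := by
    apply div_nonpos_of_nonneg_of_nonpos <;> linarith
  have h2 := mul_le_mul_of_nonpos_left hLTX hc2
  have key : -Real.logb 2 (⨆ x, ∑ y, P x y)
      - ν/(1-ν) * Real.logb 2 (privP P F) ≤ ε := by linarith
  -- feasibility for gInf
  have hψcon : Real.logb 2 (privP P F / pcX P) ≤ ψ := by
    have hpcX : pcX P = ⨆ x, ∑ y, P x y := rfl
    rw [hpcX, Real.logb_div (ne_of_gt hTX_pos) (ne_of_gt hmX), hψ]
    simp only [minEnt]
    rw [show (ν - 1) / ν * ε + 1 / ν * -Real.logb 2 (⨆ x, ∑ y, P x y)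
        = ((ν - 1) * ε - Real.logb 2 (⨆ x, ∑ y, P x y)) / ν by field_simp; ring]
    rw [le_div_iff₀ hν0]
    have h3 := mul_le_mul_of_nonneg_left key (show (0:ℝ) ≤ ν - 1 by linarith)
    have hid2 : (ν - 1) * (-Real.logb 2 (⨆ x, ∑ y, P x y)
        - ν/(1-ν) * Real.logb 2 (privP P F))
        = -(ν - 1) * Real.logb 2 (⨆ x, ∑ y, P x y) + ν * Real.logb 2 (privP P F) := by
      field_simp; ring
    rw [hid2] at h3
    nlinarith [h3]
  have hv0 : Real.logb 2 (privU P F / pcY P) ≤ gInf P ψ :=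
    le_csSup (gInf_bddAbove hN P ⟨hP0, hP1⟩ ψ) ⟨F, ⟨hF0, hF1⟩, hψcon, rfl⟩
  -- utility analysis
  have hpcY_le_TY : pcY P ≤ privU P F := pcY_le_privU hN P ⟨hP0, hP1⟩ ⟨hF0, hF1⟩
  have hTY_pos : 0 < privU P F := lt_of_lt_of_le hmY hpcY_le_TY
  have hTY_le_SY : privU P F ≤ ∑ z, (∑ y, ((∑ x, P x y) * F y z) ^ μ) ^ (1/μ) :=
    Finset.sum_le_sum fun z _ =>
      sup_le_sum_rpow hN (fun y => (∑ x, P x y) * F y z) (hR0 z) hμ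
  have hSY_pos : 0 < ∑ z, (∑ y, ((∑ x, P x y) * F y z) ^ μ) ^ (1/μ) :=
    lt_of_lt_of_le hTY_pos hTY_le_SY
  have ht : (0:ℝ) < (μ - 1)/μ := div_pos (by linarith) (by linarith)
  have ht1 : (μ - 1)/μ < 1 := by
    rw [div_lt_one (by linarith)]; linarith
  have hwsum : ∑ z, ∑ y, (∑ x, P x y) * F y z = 1 := by
    rw [Finset.sum_comm]
    rw [Finset.sum_congr rfl fun y _ => hRmarg y]
    exact hsumq
  have hstep : ∀ z : Fin (N+1), (∑ y, ((∑ x, P x y) * F y z) ^ μ) ^ (1/μ)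
      ≤ (⨆ y, (∑ x, P x y) * F y z) ^ ((μ - 1)/μ)
        * (∑ y, (∑ x, P x y) * F y z) ^ (1 - (μ - 1)/μ) := by
    intro z
    have hmz : 0 ≤ ⨆ y, (∑ x, P x y) * F y z := fin_sup_nonneg hN _ (hR0 z)
    have hwz : 0 ≤ ∑ y, (∑ x, P x y) * F y z :=
      Finset.sum_nonneg fun y _ => hR0 z y
    have hb := sum_rpow_le hN (fun y => (∑ x, P x y) * F y z) (hR0 z) hμ
    calc (∑ y, ((∑ x, P x y) * F y z) ^ μ) ^ (1/μ)
        ≤ ((⨆ y, (∑ x, P x y) * F y z) ^ (μ - 1)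
            * ∑ y, (∑ x, P x y) * F y z) ^ (1/μ) :=
          Real.rpow_le_rpow
            (Finset.sum_nonneg fun y _ => Real.rpow_nonneg (hR0 z y) μ)
            hb (by positivity)
      _ = (⨆ y, (∑ x, P x y) * F y z) ^ ((μ - 1)/μ)
          * (∑ y, (∑ x, P x y) * F y z) ^ (1 - (μ - 1)/μ) := by
          rw [Real.mul_rpow (Real.rpow_nonneg hmz _) hwz, ← Real.rpow_mul hmz]
          congr 1
          · congr 1; field_simp
          · congr 1; field_simp; ring
  have hSY_le : ∑ z, (∑ y, ((∑ x, P x y) * F y z) ^ μ) ^ (1/μ)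
      ≤ privU P F ^ ((μ - 1)/μ) := by
    calc ∑ z, (∑ y, ((∑ x, P x y) * F y z) ^ μ) ^ (1/μ)
        ≤ ∑ z, (⨆ y, (∑ x, P x y) * F y z) ^ ((μ - 1)/μ)
            * (∑ y, (∑ x, P x y) * F y z) ^ (1 - (μ - 1)/μ) :=
          Finset.sum_le_sum fun z _ => hstep z
      _ ≤ (∑ z, ⨆ y, (∑ x, P x y) * F y z) ^ ((μ - 1)/μ) :=
          hoelder_sum (fun z => ⨆ y, (∑ x, P x y) * F y z)
            (fun z => ∑ y, (∑ x, P x y) * F y z)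
            (fun z => fin_sup_nonneg hN _ (hR0 z))
            (fun z => Finset.sum_nonneg fun y _ => hR0 z y)
            ht ht1 hTY_pos hwsum
  have hLSY : Real.logb 2 (∑ z, (∑ y, ((∑ x, P x y) * F y z) ^ μ) ^ (1/μ))
      ≤ (μ - 1)/μ * Real.logb 2 (privU P F) := by
    rw [← logb_rpow' hTY_pos]
    exact Real.logb_le_logb_of_le one_lt_two hSY_pos hSY_le
  have hc3 : μ/(1-μ) ≤ 0 := by
    apply div_nonpos_of_nonneg_of_nonpos <;> linarith
  have h4 := mul_le_mul_of_nonpos_left hLSY hc3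
  have hid3 : μ/(1-μ) * ((μ - 1)/μ * Real.logb 2 (privU P F))
      = -Real.logb 2 (privU P F) := by
    field_simp; ring
  rw [hid3] at h4
  -- conclude
  simp only [arimotoMI, renyiH, arimotoCondEnt] at hv
  simp only [hRmarg] at hv
  have hsplit : Real.logb 2 (privU P F / pcY P)
      = Real.logb 2 (privU P F) - Real.logb 2 (pcY P) :=
    Real.logb_div (ne_of_gt hTY_pos) (ne_of_gt hmY)
  rw [hsplit] at hv0
  have hme : minEnt (fun y => ∑ x, P x y) = -Real.logb 2 (pcY P) := rfl
  rw [hv]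
  rw [hme]
  simp only [renyiH]
  linarith
end
end
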